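/- arXiv:1810.10688 — 2 statements merged into one kernel-verified Lean document; each statement's English description precedes it below -/
import Mathlib

section
/- Let n ≥ 2. There exists ρ₀ ∈ (0, 1/2), depending only on n, such that for every ρ ∈ (0, ρ₀] the function w(x) := (1/2)·xₙ/(−log xₙ) + |x'|² xₙ^{1/n}, defined for 0 < xₙ < 1, satisfies det D²w(x) > 1 at every point x of the ball Ω := B(ρ eₙ, ρ), and w(x) ≤ xₙ/(−log xₙ) at every point x ∈ ∂Ω with xₙ > 0. -/
open scoped RealInnerProductSpace
open Metric Set MeasureTheory

noncomputable section

set_option linter.unusedVariables false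

/-- The determinant of the Hessian `D²u` at `x`. -/
def mongeDet {n : ℕ} (u : EuclideanSpace ℝ (Fin n) → ℝ) (x : EuclideanSpace ℝ (Fin n)) : ℝ :=
  (Matrix.of fun i j : Fin n =>
    iteratedFDeriv ℝ 2 u x ![EuclideanSpace.single i 1, EuclideanSpace.single j 1]).det

/-- The last coordinate `xₙ` of a point `x ∈ ℝⁿ`. -/
def lastC {n : ℕ} (hn : 2 ≤ n) (x : EuclideanSpace ℝ (Fin n)) : ℝ := x ⟨n - 1, by omega⟩

/-- The projection `x ↦ x'` onto the first `n-1` coordinates. -/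
def projE {n : ℕ} (x : EuclideanSpace ℝ (Fin n)) : EuclideanSpace ℝ (Fin (n - 1)) :=
  WithLp.toLp 2 fun i => x (Fin.castLE (Nat.sub_le n 1) i)

/-- The embedding `x' ↦ (x', 0)` of `ℝⁿ⁻¹` into `ℝⁿ`. -/
def embE {n : ℕ} (x' : EuclideanSpace ℝ (Fin (n - 1))) : EuclideanSpace ℝ (Fin n) :=
  WithLp.toLp 2 fun j => if h : (j : ℕ) < n - 1 then x' ⟨j, h⟩ else 0

/-- The section `S_h(y)` of `u` at an interior point `y` with height `h`. -/
def sectU {n : ℕ} (Ω : Set (EuclideanSpace ℝ (Fin n))) (u : EuclideanSpace ℝ (Fin n) → ℝ)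
    (y : EuclideanSpace ℝ (Fin n)) (h : ℝ) : Set (EuclideanSpace ℝ (Fin n)) :=
  {x ∈ closure Ω | u x < u y + ⟪gradient u y, x - y⟫ + h}

/-!
Write `t = xₙ`, `S = |x'|²` and `p = 1/n`, so that `w = f(t) + S t^p` with
`f(t) = t / (2|log t|)`.
The Hessian of `w` is an arrowhead matrix: `2t^p` times the identity in the `x'` directions,
bordered by `2p t^(p-1) x'`, with corner `f''(t) + S p(p-1) t^(p-2)`. Its Schur complement gives
`det D²w = (2t^p)^(n-1) (f''(t) - p(p+1) S t^(p-2))`, and `(t^p)^(n-1) = t^(1-p)`.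
In `B(ρeₙ, ρ)` we have `S < t(2ρ - t) ≤ t`, and `f''(t) ≥ 1/(2t log²t)`, so
`det D²w ≥ 2^(n-1) (t^(-p) / (2 log²t) - 1)`, which exceeds `1` once `3 t^p log²t < 1`.
On the sphere `S ≤ t` again, and `S t^p ≤ t / (2|log t|)` once `2|log t| t^p ≤ 1`.
Both smallness conditions hold for `t ≤ 2ρ₀` with `ρ₀` small, because `t^p log²t → 0`
as `t → 0⁺`.
-/

open Real Filter Topology

section ArrowMatrix

variable {K : Type*} [Field K] {m : ℕ}

def arrowMatrix (a : K) (v : Fin m → K) (d : K) : Matrix (Fin (m + 1)) (Fin (m + 1)) K :=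
  Matrix.reindex finSumFinEquiv finSumFinEquiv <|
    Matrix.fromBlocks (a • 1) (Matrix.replicateCol (Fin 1) v) (Matrix.replicateRow (Fin 1) v)
      (Matrix.of fun _ _ => d)

variable (a : K) (v : Fin m → K) (d : K)

@[simp] lemma arrowMatrix_castSucc_castSucc (i j : Fin m) :
    arrowMatrix a v d i.castSucc j.castSucc = if i = j then a else 0 := by
  simp [arrowMatrix, Matrix.one_apply]

@[simp] lemma arrowMatrix_castSucc_last (i : Fin m) :
    arrowMatrix a v d i.castSucc (Fin.last m) = v i := by
  simp [arrowMatrix]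

@[simp] lemma arrowMatrix_last_castSucc (j : Fin m) :
    arrowMatrix a v d (Fin.last m) j.castSucc = v j := by
  simp [arrowMatrix]

@[simp] lemma arrowMatrix_last_last : arrowMatrix a v d (Fin.last m) (Fin.last m) = d := by
  simp [arrowMatrix]

lemma det_arrowMatrix {a : K} (ha : a ≠ 0) :
    (arrowMatrix a v d).det = a ^ m * (d - (∑ i, v i ^ 2) / a) := by
  let _ : Invertible (a • 1 : Matrix (Fin m) (Fin m) K) :=
    ⟨a⁻¹ • 1, by simp [ha], by simp [ha]⟩
  have hinv : ⅟(a • 1 : Matrix (Fin m) (Fin m) K) = a⁻¹ • 1 := rfl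
  rw [arrowMatrix, Matrix.det_reindex_self, Matrix.det_fromBlocks₁₁, Matrix.det_smul,
    Matrix.det_one, Fintype.card_fin, mul_one, Matrix.det_fin_one, hinv]
  simp [Matrix.mul_apply, pow_two, div_eq_inv_mul, Finset.mul_sum, mul_comm]

end ArrowMatrix

section Head

variable {m : ℕ}

def headNormSq (x : EuclideanSpace ℝ (Fin (m + 1))) : ℝ := ∑ i : Fin m, x i.castSucc ^ 2

def headInner :
    EuclideanSpace ℝ (Fin (m + 1)) →L[ℝ] EuclideanSpace ℝ (Fin (m + 1)) →L[ℝ] ℝ :=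
  ∑ i : Fin m, (EuclideanSpace.proj i.castSucc).smulRight (EuclideanSpace.proj i.castSucc)

lemma headInner_apply (u v : EuclideanSpace ℝ (Fin (m + 1))) :
    headInner u v = ∑ i : Fin m, u i.castSucc * v i.castSucc := by
  simp [headInner]

lemma headInner_comm (u v : EuclideanSpace ℝ (Fin (m + 1))) : headInner u v = headInner v u := by
  simp only [headInner_apply, mul_comm]

@[simp] lemma headInner_single_castSucc (u : EuclideanSpace ℝ (Fin (m + 1))) (i : Fin m) :
    headInner u (EuclideanSpace.single i.castSucc 1) = u i.castSucc := by
  simp [headInner_apply, PiLp.single_apply]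

@[simp] lemma headInner_single_last (u : EuclideanSpace ℝ (Fin (m + 1))) :
    headInner u (EuclideanSpace.single (Fin.last m) 1) = 0 := by
  simp [headInner_apply, Fin.castSucc_ne_last]

@[simp] lemma single_castSucc_headInner (u : EuclideanSpace ℝ (Fin (m + 1))) (i : Fin m) :
    headInner (EuclideanSpace.single i.castSucc 1) u = u i.castSucc := by
  rw [headInner_comm, headInner_single_castSucc]

@[simp] lemma single_last_headInner (u : EuclideanSpace ℝ (Fin (m + 1))) :
    headInner (EuclideanSpace.single (Fin.last m) 1) u = 0 := by
  rw [headInner_comm, headInner_single_last]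

lemma hasFDerivAt_headNormSq (x : EuclideanSpace ℝ (Fin (m + 1))) :
    HasFDerivAt headNormSq ((2 : ℝ) • headInner x) x := by
  have h := HasFDerivAt.fun_sum (u := Finset.univ) fun (i : Fin m) _ =>
    ((EuclideanSpace.proj (𝕜 := ℝ) (i.castSucc : Fin (m + 1))).hasFDerivAt (x := x)).pow 2
  refine h.congr_fderiv ?_
  ext v
  simp [headInner_apply, Finset.mul_sum, mul_assoc]

def headQuadratic (φ ψ : ℝ → ℝ) (z : EuclideanSpace ℝ (Fin (m + 1))) : ℝ :=
  φ (z (Fin.last m)) + headNormSq z * ψ (z (Fin.last m))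

variable {φ ψ φ' ψ' : ℝ → ℝ} {x : EuclideanSpace ℝ (Fin (m + 1))}

lemma hasFDerivAt_headQuadratic (hφ : HasDerivAt φ (φ' (x (Fin.last m))) (x (Fin.last m)))
    (hψ : HasDerivAt ψ (ψ' (x (Fin.last m))) (x (Fin.last m))) :
    HasFDerivAt (headQuadratic φ ψ)
      ((φ' (x (Fin.last m)) + headNormSq x * ψ' (x (Fin.last m))) •
          EuclideanSpace.proj (Fin.last m) + (2 * ψ (x (Fin.last m))) • headInner x) x := by
  have hπ := (EuclideanSpace.proj (𝕜 := ℝ) (Fin.last m)).hasFDerivAt (x := x)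
  refine ((hφ.comp_hasFDerivAt x hπ).add
    ((hasFDerivAt_headNormSq x).mul (hψ.comp_hasFDerivAt x hπ))).congr_fderiv ?_
  ext v
  simp
  ring

lemma hessian_headQuadratic {φ'' ψ'' : ℝ}
    (hφ : ∀ᶠ s in 𝓝 (x (Fin.last m)), HasDerivAt φ (φ' s) s)
    (hψ : ∀ᶠ s in 𝓝 (x (Fin.last m)), HasDerivAt ψ (ψ' s) s)
    (hφ' : HasDerivAt φ' φ'' (x (Fin.last m))) (hψ' : HasDerivAt ψ' ψ'' (x (Fin.last m))) :
    (Matrix.of fun i j : Fin (m + 1) => iteratedFDeriv ℝ 2 (headQuadratic φ ψ) x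
        ![EuclideanSpace.single i 1, EuclideanSpace.single j 1]) =
      arrowMatrix (2 * ψ (x (Fin.last m))) (fun i => 2 * ψ' (x (Fin.last m)) * x i.castSucc)
        (φ'' + headNormSq x * ψ'') := by
  have hπ := (EuclideanSpace.proj (𝕜 := ℝ) (Fin.last m)).hasFDerivAt (x := x)
  set L : EuclideanSpace ℝ (Fin (m + 1)) → _ := fun z =>
      (φ' (z (Fin.last m)) + headNormSq z * ψ' (z (Fin.last m))) •
          EuclideanSpace.proj (Fin.last m) + (2 * ψ (z (Fin.last m))) • headInner z
  have hfderiv : fderiv ℝ (headQuadratic φ ψ) =ᶠ[𝓝 x] L := by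
    have hcont := (EuclideanSpace.proj (𝕜 := ℝ) (Fin.last m)).continuous.tendsto x
    filter_upwards [hcont.eventually hφ, hcont.eventually hψ] with z hφz hψz
    exact (hasFDerivAt_headQuadratic hφz hψz).fderiv
  have hcoeff := (hφ'.comp_hasFDerivAt x hπ).add
    ((hasFDerivAt_headNormSq x).mul (hψ'.comp_hasFDerivAt x hπ))
  have hscale := (hψ.self_of_nhds.comp_hasFDerivAt x hπ).const_mul 2
  have hsecond : HasFDerivAt L _ x :=
    (hcoeff.smul (hasFDerivAt_const (EuclideanSpace.proj (Fin.last m)) x)).add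
      (hscale.smul headInner.hasFDerivAt)
  ext i j
  rw [Matrix.of_apply, iteratedFDeriv_two_apply, hfderiv.fderiv_eq, hsecond.fderiv]
  induction i using Fin.lastCases <;> induction j using Fin.lastCases <;>
    simp [eq_comm]
  ring

lemma mongeDet_headQuadratic {φ'' ψ'' : ℝ}
    (hφ : ∀ᶠ s in 𝓝 (x (Fin.last m)), HasDerivAt φ (φ' s) s)
    (hψ : ∀ᶠ s in 𝓝 (x (Fin.last m)), HasDerivAt ψ (ψ' s) s)
    (hφ' : HasDerivAt φ' φ'' (x (Fin.last m))) (hψ' : HasDerivAt ψ' ψ'' (x (Fin.last m)))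
    (hψ₀ : ψ (x (Fin.last m)) ≠ 0) :
    mongeDet (headQuadratic φ ψ) x = (2 * ψ (x (Fin.last m))) ^ m *
      (φ'' + headNormSq x * ψ'' -
        2 * ψ' (x (Fin.last m)) ^ 2 * headNormSq x / ψ (x (Fin.last m))) := by
  rw [mongeDet, hessian_headQuadratic hφ hψ hφ' hψ',
    det_arrowMatrix _ _ (mul_ne_zero two_ne_zero hψ₀)]
  have hsum : ∑ i : Fin m, (2 * ψ' (x (Fin.last m)) * x i.castSucc) ^ 2 =
      4 * ψ' (x (Fin.last m)) ^ 2 * headNormSq x := by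
    simp only [headNormSq, Finset.mul_sum, mul_pow]
    norm_num
  rw [hsum]
  field_simp
  ring

end Head

section OneVariable

def logBarrier (t : ℝ) : ℝ := 1 / 2 * (t / -log t)

variable {t : ℝ}

lemma hasDerivAt_logBarrier (ht : t ≠ 0) (hlog : log t ≠ 0) :
    HasDerivAt logBarrier ((1 - log t) / (2 * log t ^ 2)) t := by
  refine (((hasDerivAt_id t).div (hasDerivAt_log ht).neg (neg_ne_zero.2 hlog)).const_mul
    (1 / 2 : ℝ)).congr_deriv ?_
  simp only [Pi.neg_apply, id]
  field_simp
  ring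

lemma hasDerivAt_logBarrier_deriv (ht : t ≠ 0) (hlog : log t ≠ 0) :
    HasDerivAt (fun s => (1 - log s) / (2 * log s ^ 2)) ((log t - 2) / (2 * t * log t ^ 3)) t := by
  refine (((hasDerivAt_log ht).const_sub 1).div (((hasDerivAt_log ht).pow 2).const_mul 2)
    (mul_ne_zero two_ne_zero (pow_ne_zero 2 hlog))).congr_deriv ?_
  simp only [Pi.pow_apply]
  field_simp
  ring

lemma hasDerivAt_mul_rpow_sub_one {p : ℝ} (ht : t ≠ 0) :
    HasDerivAt (fun s => p * s ^ (p - 1)) (p * (p - 1) * t ^ (p - 2)) t := by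
  refine ((hasDerivAt_rpow_const (p := p - 1) (Or.inl ht)).const_mul p).congr_deriv ?_
  rw [sub_sub, one_add_one_eq_two, mul_assoc]

lemma rpow_schur_term_eq {p S : ℝ} (ht : 0 < t) :
    S * (p * (p - 1) * t ^ (p - 2)) - 2 * (p * t ^ (p - 1)) ^ 2 * S / t ^ p =
      -(p * (p + 1) * S * t ^ (p - 2)) := by
  have hsq : (t ^ (p - 1)) ^ 2 = t ^ (p - 2) * t ^ p := by
    rw [← rpow_natCast, ← rpow_mul ht.le, ← rpow_add ht]
    ring_nf
  have htp : t ^ p ≠ 0 := (rpow_pos_of_pos ht p).ne'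
  rw [mul_pow, hsq]
  field_simp
  ring

lemma one_lt_logBarrier_det {m : ℕ} (hm : 1 ≤ m) {p S : ℝ} (hp : p * (m + 1) = 1)
    (ht₀ : 0 < t) (ht₁ : t < 1) (hsmall : 3 * log t ^ 2 * t ^ p < 1)
    (hS : 0 ≤ S) (hSt : S ≤ t) :
    1 < (2 * t ^ p) ^ m * ((log t - 2) / (2 * t * log t ^ 3) - p * (p + 1) * S * t ^ (p - 2)) := by
  have hp₀ : 0 < p := by
    have : (0 : ℝ) < m + 1 := by positivity
    nlinarith
  have hp_half : p ≤ 1 / 2 := by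
    have : (1 : ℝ) ≤ m := by exact_mod_cast hm
    nlinarith
  set L := log t
  set u := t ^ p
  have hL : L < 0 := log_neg ht₀ ht₁
  have hu : 0 < u := rpow_pos_of_pos ht₀ p
  have hum : u ^ m = t / u := by
    rw [← rpow_natCast, ← rpow_mul ht₀.le, eq_div_iff hu.ne', ← rpow_add ht₀,
      show p * m + p = 1 by linarith, rpow_one]
  have hpow : t ^ (p - 2) = u / t ^ 2 := by rw [rpow_sub ht₀, rpow_two]
  have hreduce : (2 * u) ^ m * ((L - 2) / (2 * t * L ^ 3) - p * (p + 1) * S * t ^ (p - 2)) =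
      2 ^ m * ((L - 2) / (2 * u * L ^ 3) - p * (p + 1) * (S / t)) := by
    rw [mul_pow, hum, hpow]
    field_simp
  have hlog_term : 3 / 2 < (L - 2) / (2 * u * L ^ 3) := by
    have hsplit : (L - 2) / (2 * u * L ^ 3) = 1 / (2 * (u * L ^ 2)) + 1 / (u * -L ^ 3) := by
      field_simp
      ring
    have hcube : 0 < -L ^ 3 := by nlinarith [pow_pos (neg_pos.2 hL) 3]
    have hmain : 3 / 2 < 1 / (2 * (u * L ^ 2)) := by
      have hL2 : 0 < L ^ 2 := by nlinarith
      rw [lt_div_iff₀ (by positivity)]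
      linarith
    have hpos : 0 < 1 / (u * -L ^ 3) := by positivity
    linarith
  have hdefect : p * (p + 1) * (S / t) ≤ 1 := by
    have hp_sq : p * (p + 1) ≤ 1 := by nlinarith
    exact mul_le_one₀ hp_sq (div_nonneg hS ht₀.le) ((div_le_one ht₀).2 hSt)
  have htwo : (2 : ℝ) ≤ 2 ^ m := le_self_pow₀ one_le_two (by omega)
  rw [hreduce]
  nlinarith

lemma logBarrier_add_le {p S : ℝ} (ht₀ : 0 < t) (hlog : log t ≤ -1)
    (hsmall : 3 * log t ^ 2 * t ^ p < 1) (hSt : S ≤ t) :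
    logBarrier t + S * t ^ p ≤ t / -log t := by
  have hL : 1 ≤ -log t := by linarith
  have hu : 0 < t ^ p := rpow_pos_of_pos ht₀ p
  have hsmall' : 2 * -log t * t ^ p ≤ 1 := by nlinarith
  have hS : S * t ^ p ≤ t / (2 * -log t) := by
    rw [le_div_iff₀ (by positivity)]
    calc S * t ^ p * (2 * -log t) ≤ t * t ^ p * (2 * -log t) := by gcongr
      _ = t * (2 * -log t * t ^ p) := by ring
      _ ≤ t * 1 := by gcongr
      _ = t := mul_one t
  have hhalf : t / -log t = 2 * (t / (2 * -log t)) := by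
    field_simp
  have hbarrier : logBarrier t = t / (2 * -log t) := by
    rw [logBarrier]
    field_simp
  linarith

lemma exists_radius_log_rpow_small {p : ℝ} (hp : 0 < p) :
    ∃ ρ₀ : ℝ, 0 < ρ₀ ∧ ρ₀ < 1 / 2 ∧
      ∀ t ∈ Ioc 0 (2 * ρ₀), log t ≤ -1 ∧ 3 * log t ^ 2 * t ^ p < 1 := by
  have hlog := tendsto_log_nhdsGT_zero.eventually_le_atBot (-1)
  have hprod : Tendsto (fun t => 3 * (log t * t ^ (p / 2)) ^ 2) (𝓝[>] 0) (𝓝 0) := by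
    simpa using ((tendsto_log_mul_rpow_nhdsGT_zero (half_pos hp)).pow 2).const_mul 3
  have hev : ∀ᶠ t in 𝓝[>] 0, log t ≤ -1 ∧ 3 * log t ^ 2 * t ^ p < 1 := by
    filter_upwards [hlog, hprod.eventually (eventually_lt_nhds one_pos), self_mem_nhdsWithin]
      with t hlog_t hprod_t (ht : 0 < t)
    refine ⟨hlog_t, lt_of_eq_of_lt ?_ hprod_t⟩
    rw [mul_pow, ← rpow_natCast (t ^ (p / 2)), ← rpow_mul ht.le, mul_assoc]
    norm_num
  obtain ⟨δ, hδ, hsub⟩ := mem_nhdsGT_iff_exists_Ioc_subset.1 hev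
  refine ⟨min (δ / 2) (1 / 4), lt_min (half_pos hδ) (by norm_num),
    by linarith [min_le_right (δ / 2) (1 / 4)], fun t ht => hsub ⟨ht.1, ht.2.trans ?_⟩⟩
  linarith [min_le_left (δ / 2) (1 / 4), hδ.out]

end OneVariable

section Geometry

variable {m : ℕ} {ρ : ℝ} {x : EuclideanSpace ℝ (Fin (m + 1))}

lemma norm_projE_sq (x : EuclideanSpace ℝ (Fin (m + 1))) : ‖projE x‖ ^ 2 = headNormSq x := by
  rw [EuclideanSpace.norm_eq, sq_sqrt (by positivity)]
  exact Finset.sum_congr rfl fun i _ => by rw [norm_eq_abs, sq_abs]; rfl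

lemma dist_single_last_sq (x : EuclideanSpace ℝ (Fin (m + 1))) (ρ : ℝ) :
    dist x (EuclideanSpace.single (Fin.last m) ρ) ^ 2 =
      headNormSq x + (x (Fin.last m) - ρ) ^ 2 := by
  rw [EuclideanSpace.dist_eq, sq_sqrt (by positivity), Fin.sum_univ_castSucc]
  simp [headNormSq, dist_eq_norm, Fin.castSucc_ne_last]

lemma headNormSq_nonneg (x : EuclideanSpace ℝ (Fin (m + 1))) : 0 ≤ headNormSq x :=
  Finset.sum_nonneg fun _ _ => sq_nonneg _

lemma headNormSq_lt_of_mem_ball (hx : x ∈ ball (EuclideanSpace.single (Fin.last m) ρ) ρ) :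
    headNormSq x < x (Fin.last m) * (2 * ρ - x (Fin.last m)) := by
  have := pow_lt_pow_left₀ (mem_ball.1 hx) dist_nonneg two_ne_zero
  rw [dist_single_last_sq] at this
  linarith

lemma headNormSq_eq_of_mem_sphere (hx : x ∈ sphere (EuclideanSpace.single (Fin.last m) ρ) ρ) :
    headNormSq x = x (Fin.last m) * (2 * ρ - x (Fin.last m)) := by
  have := congrArg (· ^ 2) (mem_sphere.1 hx)
  simp only [dist_single_last_sq] at this
  linarith

end Geometry

section Barrier

variable {m : ℕ} {p ρ : ℝ} {x : EuclideanSpace ℝ (Fin (m + 1))}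

lemma mongeDet_headQuadratic_logBarrier_rpow
    (ht₀ : 0 < x (Fin.last m)) (ht₁ : x (Fin.last m) < 1) :
    mongeDet (headQuadratic logBarrier (· ^ p)) x = (2 * x (Fin.last m) ^ p) ^ m *
      ((log (x (Fin.last m)) - 2) / (2 * x (Fin.last m) * log (x (Fin.last m)) ^ 3) -
        p * (p + 1) * headNormSq x * x (Fin.last m) ^ (p - 2)) := by
  have hbarrier : ∀ᶠ s in 𝓝 (x (Fin.last m)),
      HasDerivAt logBarrier ((1 - log s) / (2 * log s ^ 2)) s := by
    filter_upwards [Ioo_mem_nhds ht₀ ht₁] with s hs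
    exact hasDerivAt_logBarrier hs.1.ne' (log_neg hs.1 hs.2).ne
  have hrpow : ∀ᶠ s in 𝓝 (x (Fin.last m)), HasDerivAt (· ^ p) (p * s ^ (p - 1)) s := by
    filter_upwards [eventually_ne_nhds ht₀.ne'] with s hs
    exact hasDerivAt_rpow_const (Or.inl hs)
  rw [mongeDet_headQuadratic hbarrier hrpow
    (hasDerivAt_logBarrier_deriv ht₀.ne' (log_neg ht₀ ht₁).ne)
    (hasDerivAt_mul_rpow_sub_one ht₀.ne') (rpow_pos_of_pos ht₀ p).ne', add_sub_assoc,
    rpow_schur_term_eq ht₀, ← sub_eq_add_neg]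

lemma one_lt_mongeDet_of_mem_ball (hm : 1 ≤ m) (hp : p * (m + 1) = 1) (hρ : ρ ≤ 1 / 2)
    (hsmall : ∀ t ∈ Ioc 0 (2 * ρ), log t ≤ -1 ∧ 3 * log t ^ 2 * t ^ p < 1)
    (hx : x ∈ ball (EuclideanSpace.single (Fin.last m) ρ) ρ) :
    1 < mongeDet (headQuadratic logBarrier (· ^ p)) x := by
  have hS := headNormSq_lt_of_mem_ball hx
  have hS₀ := headNormSq_nonneg x
  have hρ₀ : 0 < ρ := pos_of_mem_ball hx
  have ht₀ : 0 < x (Fin.last m) := by nlinarith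
  have ht_le : x (Fin.last m) ≤ 2 * ρ := by nlinarith
  obtain ⟨hlog, hsmall_t⟩ := hsmall _ ⟨ht₀, ht_le⟩
  have ht₁ : x (Fin.last m) < 1 := (log_neg_iff ht₀).1 (by linarith)
  rw [mongeDet_headQuadratic_logBarrier_rpow ht₀ ht₁]
  exact one_lt_logBarrier_det hm hp ht₀ ht₁ hsmall_t hS₀ (by nlinarith)

lemma headQuadratic_le_of_mem_sphere (hρ : ρ ≤ 1 / 2)
    (hsmall : ∀ t ∈ Ioc 0 (2 * ρ), log t ≤ -1 ∧ 3 * log t ^ 2 * t ^ p < 1)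
    (hx : x ∈ sphere (EuclideanSpace.single (Fin.last m) ρ) ρ) (ht₀ : 0 < x (Fin.last m)) :
    headQuadratic logBarrier (· ^ p) x ≤ x (Fin.last m) / -log (x (Fin.last m)) := by
  have hS := headNormSq_eq_of_mem_sphere hx
  have hS₀ := headNormSq_nonneg x
  obtain ⟨hlog, hsmall_t⟩ := hsmall _ ⟨ht₀, by nlinarith⟩
  exact logBarrier_add_le ht₀ hlog hsmall_t (by nlinarith)

end Barrier

/-- the explicit barrier `w(x) = (1/2)·xₙ/(−log xₙ) + |x'|² xₙ^{1/n}`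
satisfies `det D²w > 1` in `Ω = B(ρeₙ, ρ)` and `w ≤ xₙ/(−log xₙ)` on `∂Ω ∩ {xₙ > 0}`,
for all small `ρ` depending only on `n`. -/
theorem barrier_log_example
    (n : ℕ) (hn : 2 ≤ n) :
    ∃ ρ₀ : ℝ, 0 < ρ₀ ∧ ρ₀ < 1 / 2 ∧
      ∀ ρ : ℝ, 0 < ρ → ρ ≤ ρ₀ →
        (∀ x ∈ ball (EuclideanSpace.single (⟨n - 1, by omega⟩ : Fin n) ρ) ρ,
          1 < mongeDet (fun z => (1 / 2) * (lastC hn z / (-Real.log (lastC hn z))) +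
            ‖projE z‖ ^ 2 * lastC hn z ^ ((1 : ℝ) / n)) x) ∧
        (∀ x ∈ frontier (ball (EuclideanSpace.single (⟨n - 1, by omega⟩ : Fin n) ρ) ρ),
          0 < lastC hn x →
          (1 / 2) * (lastC hn x / (-Real.log (lastC hn x))) +
              ‖projE x‖ ^ 2 * lastC hn x ^ ((1 : ℝ) / n) ≤
            lastC hn x / (-Real.log (lastC hn x))) := by
  obtain ⟨m, rfl⟩ : ∃ m, n = m + 1 := ⟨n - 1, by omega⟩
  set p : ℝ := 1 / ↑(m + 1)
  have hp : p * (m + 1) = 1 := by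
    rw [← Nat.cast_succ]
    exact one_div_mul_cancel (by positivity)
  have hbarrier : (fun z => (1 / 2) * (lastC hn z / (-log (lastC hn z))) +
      ‖projE z‖ ^ 2 * lastC hn z ^ p) = headQuadratic logBarrier (· ^ p) := by
    funext z
    rw [norm_projE_sq]
    -- at `n = m + 1`, `lastC hn z` is definitionally `z (Fin.last m)`
    rfl
  obtain ⟨ρ₀, hρ₀, hρ₀_half, hsmall⟩ :=
    exists_radius_log_rpow_small (p := p) (by positivity)
  refine ⟨ρ₀, hρ₀, hρ₀_half, fun ρ hρ hρρ₀ => ?_⟩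
  have hsmall_ρ : ∀ t ∈ Ioc 0 (2 * ρ), log t ≤ -1 ∧ 3 * log t ^ 2 * t ^ p < 1 :=
    fun t ht => hsmall t ⟨ht.1, ht.2.trans (by linarith)⟩
  refine ⟨fun x hx => ?_, fun x hx ht₀ => ?_⟩
  · rw [hbarrier]
    exact one_lt_mongeDet_of_mem_ball (by omega) hp (by linarith) hsmall_ρ hx
  · rw [frontier_ball _ hρ.ne'] at hx
    rw [norm_projE_sq]
    exact headQuadratic_le_of_mem_sphere (by linarith) hsmall_ρ hx ht₀
end
end

section
/- Let n ≥ 2, α ∈ (0,1), L, K > 0. Let u : closure(B₁⁺) → ℝ be convex, Lipschitz with constant L, differentiable in B₁⁺, with u(0) = 0, and suppose b ∈ ℝⁿ satisfies u(x) ≥ b·x for all x ∈ closure(B₁⁺) (b is a supporting slope at 0) and u(x', 0) − b'·x' ≤ K|x'|^{1+α} for all |x'| ≤ 1, where b' = (b₁, …, b_{n−1}). Then there exists C > 0 depending only on n, α, L, K and |b| such that |∇_{x'}u(y) − b'| ≤ C|y|^{α/2} for every y ∈ B₁⁺, where ∇_{x'}u denotes the first n−1 components of the gradient of u. -/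
open scoped RealInnerProductSpace
open Metric Set MeasureTheory

noncomputable section

set_option linter.unusedVariables false

/-- The half ball `B_r⁺ = {|x| < r, xₙ > 0}` in `ℝⁿ`. -/
def BplusR (n : ℕ) (hn : 2 ≤ n) (r : ℝ) : Set (EuclideanSpace ℝ (Fin n)) :=
  {x | ‖x‖ < r ∧ 0 < x ⟨n - 1, by omega⟩}


/-!
Let `r = ‖y‖ ≤ 1/4`, `t = √r`, and move from `y` tangentially by `t` in the direction of
`∇_{x'}u(y) − b'`, reaching `z`. The gradient inequality for the convex `u`, together with
`u(y) ≥ b·y`, bounds `t |∇_{x'}u(y) − b'|` by `u(z) − b·z`. Dropping `z` to the boundary point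
`(z', 0)` costs at most `(L + |b|) zₙ ≤ (L + |b|) t²`, and the boundary hypothesis gives
`u(z', 0) − b'·z' ≤ K |z'|^{1+α} ≤ 4K t^{1+α}`. Dividing by `t` leaves `O(t^α) = O(r^{α/2})`.
For `r > 1/4` the bound `|∇u| ≤ L` already suffices.
-/

open Topology

theorem ConvexOn.inner_gradient_le_sub {E : Type*} [NormedAddCommGroup E] [InnerProductSpace ℝ E]
    [CompleteSpace E] {s : Set E} {f : E → ℝ} (hf : ConvexOn ℝ s f) {x y : E} (hx : x ∈ s)
    (hy : y ∈ s) (hd : DifferentiableAt ℝ f x) : ⟪gradient f x, y - x⟫ ≤ f y - f x := by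
  have hline : HasDerivAt (f ∘ AffineMap.lineMap x y) (fderiv ℝ f x (y - x)) (0 : ℝ) := by
    refine HasFDerivAt.comp_hasDerivAt (0 : ℝ) ?_ AffineMap.hasDerivAt_lineMap
    simpa using hd.hasFDerivAt
  have := (hf.comp_affineMap (AffineMap.lineMap x y)).le_slope_of_hasDerivAt
    (x := 0) (y := 1) (by simpa) (by simpa) zero_lt_one hline
  simpa [gradient, slope] using this

theorem ConvexOn.inner_gradient_sub_le_sub_inner {E : Type*} [NormedAddCommGroup E]
    [InnerProductSpace ℝ E] [CompleteSpace E] {s : Set E} {f : E → ℝ} (hf : ConvexOn ℝ s f)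
    {b x z : E} (hx : x ∈ s) (hz : z ∈ s) (hd : DifferentiableAt ℝ f x) (hb : ⟪b, x⟫ ≤ f x) :
    ⟪gradient f x - b, z - x⟫ ≤ f z - ⟪b, z⟫ := by
  have := hf.inner_gradient_le_sub hx hz hd
  rw [inner_sub_left, inner_sub_right b]
  linarith

theorem norm_gradient_le_of_lipschitzOn {E : Type*} [NormedAddCommGroup E]
    [InnerProductSpace ℝ E] [CompleteSpace E] {f : E → ℝ} {x : E} {s : Set E} (hs : s ∈ 𝓝 x)
    {C : NNReal} (hlip : LipschitzOnWith C f s) : ‖gradient f x‖ ≤ C := by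
  rw [gradient, LinearIsometryEquiv.norm_map]
  exact norm_fderiv_le_of_lipschitzOn ℝ hs hlip

theorem one_half_le_rpow_of_quarter_le {r a : ℝ} (hr : 1 / 4 ≤ r) (hr1 : r ≤ 1) (ha : a ≤ 1) :
    1 / 2 ≤ r ^ (a / 2) :=
  calc (1 : ℝ) / 2 = (1 / 4) ^ (1 / 2 : ℝ) := by
        rw [← Real.sqrt_eq_rpow, show (1 / 4 : ℝ) = (1 / 2) ^ 2 by norm_num,
          Real.sqrt_sq (by norm_num)]
    _ ≤ r ^ (1 / 2 : ℝ) := by gcongr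
    _ ≤ r ^ (a / 2) := Real.rpow_le_rpow_of_exponent_ge (by linarith) hr1 (by linarith)

theorem two_mul_rpow_one_add_le {t a : ℝ} (ht : 0 < t) (ha : a ≤ 1) :
    (2 * t) ^ (1 + a) ≤ 4 * (t * t ^ a) :=
  calc (2 * t) ^ (1 + a) = 2 ^ (1 + a) * (t * t ^ a) := by
        rw [Real.mul_rpow zero_le_two ht.le, Real.rpow_add ht, Real.rpow_one]
    _ ≤ 2 ^ (2 : ℝ) * (t * t ^ a) := by gcongr <;> [norm_num; linarith]
    _ = 4 * (t * t ^ a) := by norm_num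

theorem isOpen_BplusR (n : ℕ) (hn : 2 ≤ n) (r : ℝ) : IsOpen (BplusR n hn r) :=
  (isOpen_lt continuous_norm continuous_const).inter
    (isOpen_lt continuous_const (EuclideanSpace.proj (𝕜 := ℝ) _).continuous)

theorem closure_BplusR (n : ℕ) (hn : 2 ≤ n) {r : ℝ} (hr : 0 < r) :
    closure (BplusR n hn r) = {x | ‖x‖ ≤ r ∧ 0 ≤ x ⟨n - 1, by omega⟩} := by
  set i : Fin n := ⟨n - 1, by omega⟩
  have hproj : Function.Surjective (EuclideanSpace.proj i : EuclideanSpace ℝ (Fin n) →L[ℝ] ℝ) :=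
    fun c => ⟨EuclideanSpace.single i c, by simp⟩
  set D := closedBall (0 : EuclideanSpace ℝ (Fin n)) r ∩ EuclideanSpace.proj i ⁻¹' Ici 0
  have hD : interior D = BplusR n hn r := by
    rw [interior_inter, interior_closedBall _ hr.ne', ContinuousLinearMap.interior_preimage _ hproj,
      interior_Ici]
    ext x; simp [BplusR, i]
  have hDconv : Convex ℝ D := (convex_closedBall _ _).inter ((convex_Ici 0).linear_preimage _)
  have hDclosed : IsClosed D :=
    isClosed_closedBall.inter (isClosed_Ici.preimage (ContinuousLinearMap.continuous _))
  have hne : (interior D).Nonempty := by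
    refine ⟨EuclideanSpace.single i (r / 2), hD ▸ ⟨?_, ?_⟩⟩
    · simp [abs_of_pos hr]; linarith
    · simp [i, hr]
  rw [← hD, hDconv.closure_interior_eq_closure_of_nonempty_interior hne, hDclosed.closure_eq]
  ext x; simp [D, i]

section Coordinates

variable {m : ℕ}

theorem inner_embE (w : EuclideanSpace ℝ (Fin (m + 1))) (x' : EuclideanSpace ℝ (Fin (m + 1 - 1))) :
    ⟪w, embE x'⟫ = ⟪projE w, x'⟫ := by
  simp [PiLp.inner_apply, Fin.sum_univ_castSucc, embE, projE]; rfl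

theorem norm_embE (x' : EuclideanSpace ℝ (Fin (m + 1 - 1))) :
    ‖(embE x' : EuclideanSpace ℝ (Fin (m + 1)))‖ = ‖x'‖ := by
  simp [EuclideanSpace.norm_eq, Fin.sum_univ_castSucc, embE]

theorem norm_projE_le (x : EuclideanSpace ℝ (Fin (m + 1))) : ‖projE x‖ ≤ ‖x‖ := by
  simp only [EuclideanSpace.norm_eq, Fin.sum_univ_castSucc (n := m)]
  gcongr
  exact le_add_of_nonneg_right (sq_nonneg _)

theorem embE_apply_last (x' : EuclideanSpace ℝ (Fin (m + 1 - 1))) :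
    (embE x' : EuclideanSpace ℝ (Fin (m + 1))) (Fin.last m) = 0 := by
  simp [embE]

theorem embE_projE_add_single (x : EuclideanSpace ℝ (Fin (m + 1))) :
    embE (projE x) + EuclideanSpace.single (Fin.last m) (x (Fin.last m)) = x := by
  ext j
  rcases Fin.eq_castSucc_or_eq_last j with ⟨i, rfl⟩ | rfl
  · simp [embE, projE, Fin.castLE, (Fin.castSucc_lt_last i).ne]
  · simp [embE]

end Coordinates

section FlatBoundary

variable {m : ℕ} {hn : 2 ≤ m + 1} {u : EuclideanSpace ℝ (Fin (m + 1)) → ℝ}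
  {b : EuclideanSpace ℝ (Fin (m + 1))} {L : NNReal} {K a : ℝ}

theorem sub_inner_le_of_boundary_growth
    (hlip : LipschitzOnWith L u (closure (BplusR (m + 1) hn 1)))
    (hbdry : ∀ x' : EuclideanSpace ℝ (Fin (m + 1 - 1)), ‖x'‖ ≤ 1 →
      u (embE x') - ⟪projE b, x'⟫ ≤ K * ‖x'‖ ^ (1 + a))
    (hK : 0 ≤ K) (ha : 0 ≤ 1 + a) {z : EuclideanSpace ℝ (Fin (m + 1))}
    (hz : z ∈ closure (BplusR (m + 1) hn 1)) :
    u z - ⟪b, z⟫ ≤ K * ‖z‖ ^ (1 + a) + (L + ‖b‖) * z (Fin.last m) := by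
  obtain ⟨hz1, hzlast⟩ : ‖z‖ ≤ 1 ∧ 0 ≤ z (Fin.last m) := by
    rwa [closure_BplusR _ _ one_pos] at hz
  set p := projE z
  have hp : ‖p‖ ≤ 1 := (norm_projE_le z).trans hz1
  have hdecomp : embE p + EuclideanSpace.single (Fin.last m) (z (Fin.last m)) = z :=
    embE_projE_add_single z
  have hmem : embE p ∈ closure (BplusR (m + 1) hn 1) := by
    rw [closure_BplusR _ _ one_pos]
    exact ⟨by rwa [norm_embE], (embE_apply_last p).ge⟩
  have hlip_z : u z - u (embE p) ≤ L * z (Fin.last m) := by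
    have := hlip.dist_le_mul z hz _ hmem
    rw [dist_eq_norm, dist_eq_norm, sub_eq_iff_eq_add'.2 hdecomp.symm, PiLp.norm_single,
      Real.norm_eq_abs, Real.norm_eq_abs, abs_of_nonneg hzlast] at this
    exact (le_abs_self _).trans this
  have hinner : ⟪b, z⟫ = ⟪projE b, p⟫ + b (Fin.last m) * z (Fin.last m) := by
    conv_lhs => rw [← hdecomp]
    rw [inner_add_right, inner_embE, EuclideanSpace.inner_single_right]
    simp [p, mul_comm]
  have hblast : -(b (Fin.last m) * z (Fin.last m)) ≤ ‖b‖ * z (Fin.last m) := by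
    rw [neg_le, ← neg_mul]
    have := (abs_le.1 ((Real.norm_eq_abs _ ▸ PiLp.norm_apply_le b (Fin.last m)))).1
    exact mul_le_mul_of_nonneg_right this hzlast
  have hgrowth : K * ‖p‖ ^ (1 + a) ≤ K * ‖z‖ ^ (1 + a) := by
    gcongr
    exact norm_projE_le z
  linarith [hbdry p hp]

variable (hconv : ConvexOn ℝ (closure (BplusR (m + 1) hn 1)) u)
  (hlip : LipschitzOnWith L u (closure (BplusR (m + 1) hn 1)))
  (hsupp : ∀ x ∈ closure (BplusR (m + 1) hn 1), ⟪b, x⟫ ≤ u x)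
  (hbdry : ∀ x' : EuclideanSpace ℝ (Fin (m + 1 - 1)), ‖x'‖ ≤ 1 →
      u (embE x') - ⟪projE b, x'⟫ ≤ K * ‖x'‖ ^ (1 + a))
  (hK : 0 ≤ K) (ha0 : 0 ≤ a)
  {y : EuclideanSpace ℝ (Fin (m + 1))} (hy : y ∈ BplusR (m + 1) hn 1)
  (hdy : DifferentiableAt ℝ u y)
include hconv hlip hsupp hbdry hK ha0 hy hdy

theorem inner_projE_gradient_sub_le {w : EuclideanSpace ℝ (Fin (m + 1 - 1))}
    (hw : y + embE w ∈ closure (BplusR (m + 1) hn 1)) :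
    ⟪projE (gradient u y) - projE b, w⟫ ≤
      K * ‖y + embE w‖ ^ (1 + a) + (L + ‖b‖) * y (Fin.last m) := by
  have hy' := subset_closure hy
  have := hconv.inner_gradient_sub_le_sub_inner hy' hw hdy (hsupp y hy')
  rw [add_sub_cancel_left, inner_embE] at this
  have hgrowth := sub_inner_le_of_boundary_growth hlip hbdry hK (by linarith) hw
  simp only [PiLp.add_apply, embE_apply_last, add_zero] at hgrowth
  exact this.trans hgrowth

theorem norm_projE_gradient_sub_le_of_norm_le_quarter (ha1 : a ≤ 1) (hy4 : ‖y‖ ≤ 1 / 4) :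
    ‖projE (gradient u y) - projE b‖ ≤ (4 * K + L + ‖b‖) * ‖y‖ ^ (a / 2) := by
  set v := projE (gradient u y) - projE b
  set r := ‖y‖
  have hylast : 0 < y (Fin.last m) := hy.2
  have hr : 0 < r := norm_pos_iff.2 fun h => by simp [h] at hylast
  set t := Real.sqrt r
  have ht : 0 < t := Real.sqrt_pos.2 hr
  have htt : t * t = r := Real.mul_self_sqrt hr.le
  have ht2 : t ≤ 1 / 2 := by nlinarith
  have hta : t ^ a = r ^ (a / 2) := by
    rw [show t = r ^ (1 / 2 : ℝ) from Real.sqrt_eq_rpow r, ← Real.rpow_mul hr.le]; ring_nf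
  rcases eq_or_ne v 0 with hv | hv
  · rw [hv, norm_zero]; positivity
  set w := (t / ‖v‖) • v
  have hvw : ⟪v, w⟫ = t * ‖v‖ := by
    rw [real_inner_smul_right, real_inner_self_eq_norm_mul_norm]
    field_simp [norm_ne_zero_iff.2 hv]
  have hw : ‖y + embE w‖ ≤ r + t := by
    have : ‖w‖ = t := by
      rw [norm_smul, Real.norm_of_nonneg (by positivity), div_mul_cancel₀ _ (norm_ne_zero_iff.2 hv)]
    exact (norm_add_le _ _).trans (by rw [norm_embE, this])
  have hmem : y + embE w ∈ BplusR (m + 1) hn 1 :=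
    ⟨by linarith, show 0 < (y + embE w) (Fin.last m) by simpa [embE_apply_last] using hylast⟩
  have hstep := inner_projE_gradient_sub_le hconv hlip hsupp hbdry hK ha0 hy hdy
    (subset_closure hmem)
  have hylast_le : y (Fin.last m) ≤ t * t :=
    htt ▸ (Real.le_norm_self _).trans (PiLp.norm_apply_le y _)
  have hK' : K * ‖y + embE w‖ ^ (1 + a) ≤ K * (4 * (t * t ^ a)) :=
    mul_le_mul_of_nonneg_left ((by gcongr; nlinarith : _ ≤ (2 * t) ^ (1 + a)).trans
      (two_mul_rpow_one_add_le ht ha1)) hK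
  have htt' : t * t ≤ t * t ^ a :=
    mul_le_mul_of_nonneg_left (Real.self_le_rpow_of_le_one ht.le (by linarith) ha1) ht.le
  have : t * ‖v‖ ≤ t * ((4 * K + L + ‖b‖) * t ^ a) := by
    nlinarith [mul_le_mul_of_nonneg_left (hylast_le.trans htt') (by positivity : (0 : ℝ) ≤ L + ‖b‖)]
  rw [← hta]
  exact le_of_mul_le_mul_left this ht

theorem norm_projE_gradient_sub_le (ha1 : a ≤ 1) :
    ‖projE (gradient u y) - projE b‖ ≤ (4 * K + 2 * (L + ‖b‖)) * ‖y‖ ^ (a / 2) := by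
  rcases le_or_gt ‖y‖ (1 / 4) with hy4 | hy4
  · calc _ ≤ (4 * K + L + ‖b‖) * ‖y‖ ^ (a / 2) :=
          norm_projE_gradient_sub_le_of_norm_le_quarter hconv hlip hsupp hbdry hK ha0 hy hdy ha1 hy4
      _ ≤ _ := by gcongr ?_ * _; linarith [norm_nonneg b, L.2]
  · have hgrad : ‖gradient u y‖ ≤ L := norm_gradient_le_of_lipschitzOn
      (Filter.mem_of_superset ((isOpen_BplusR _ hn 1).mem_nhds hy) subset_closure) hlip
    have hy2 := one_half_le_rpow_of_quarter_le hy4.le hy.1.le ha1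
    calc ‖projE (gradient u y) - projE b‖ = ‖projE (gradient u y - b)‖ := rfl
      _ ≤ ‖gradient u y - b‖ := norm_projE_le _
      _ ≤ L + ‖b‖ := (norm_sub_le _ _).trans (by gcongr)
      _ ≤ 2 * (L + ‖b‖) * ‖y‖ ^ (a / 2) := by nlinarith [norm_nonneg b, L.2]
      _ ≤ _ := by rw [add_mul _ (2 * _)]; linarith [mul_nonneg hK (hy2.trans' (by norm_num))]

end FlatBoundary

/-- tangential gradient estimate: if the boundary values on `{xₙ = 0}`
separate at most like `K|x'|^{1+α}` from the supporting slope `b` at `0`, then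
`|∇_{x'}u(y) − b'| ≤ C|y|^{α/2}` in `B₁⁺`. -/
theorem tangential_gradient_estimate_flat
    (n : ℕ) (hn : 2 ≤ n) (a L K Mb : ℝ)
    (ha0 : 0 < a) (ha1 : a < 1) (hL : 0 < L) (hK : 0 < K) (hMb : 0 ≤ Mb) :
    ∃ C > 0,
      ∀ (u : EuclideanSpace ℝ (Fin n) → ℝ) (b : EuclideanSpace ℝ (Fin n)),
        ConvexOn ℝ (closure (BplusR n hn 1)) u →
        (∀ x ∈ closure (BplusR n hn 1), ∀ y ∈ closure (BplusR n hn 1),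
          |u x - u y| ≤ L * ‖x - y‖) →
        DifferentiableOn ℝ u (BplusR n hn 1) →
        u 0 = 0 →
        (∀ x ∈ closure (BplusR n hn 1), ⟪b, x⟫ ≤ u x) →
        ‖b‖ ≤ Mb →
        (∀ x' : EuclideanSpace ℝ (Fin (n - 1)), ‖x'‖ ≤ 1 →
          u (embE x') - ⟪projE b, x'⟫ ≤ K * ‖x'‖ ^ (1 + a)) →
        ∀ y ∈ BplusR n hn 1,
          ‖projE (gradient u y) - projE b‖ ≤ C * ‖y‖ ^ (a / 2) := by
  obtain ⟨m, rfl⟩ : ∃ m, n = m + 1 := ⟨n - 1, by omega⟩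
  refine ⟨4 * K + 2 * (L + Mb), by positivity, ?_⟩
  intro u b hconv hlip hdiff _ hsupp hbnorm hbdry y hy
  have hlip' : LipschitzOnWith ⟨L, hL.le⟩ u (closure (BplusR (m + 1) hn 1)) :=
    LipschitzOnWith.of_dist_le_mul fun x hx z hz => by
      rw [Real.dist_eq, dist_eq_norm]; exact hlip x hx z hz
  have hdy : DifferentiableAt ℝ u y :=
    hdiff.differentiableAt ((isOpen_BplusR _ hn 1).mem_nhds hy)
  calc _ ≤ (4 * K + 2 * (L + ‖b‖)) * ‖y‖ ^ (a / 2) :=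
        norm_projE_gradient_sub_le hconv hlip' hsupp hbdry hK.le ha0.le hy hdy ha1.le
    _ ≤ _ := by gcongr
end
end
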